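/- arXiv:2007.12575 — 3 statements merged into one kernel-verified Lean document; each statement's English description precedes it below -/
import Mathlib

section
/- For every integer k ≥ 1, every complex d×d density matrix ρ and positive semidefinite σ with supp(ρ) ⊆ supp(σ), the quantity Q^{im}_{α_k}(ρ‖σ) equals the supremum of (Re tr(ρ·(V₁+V₁*)/2))^{α_k} over complex d×d matrices V₁,…,V_k and positive semidefinite Z satisfying tr(σZ) = 1, V₁+V₁* ≥ 0, Vᵢ*Vᵢ ≤ (Vᵢ₊₁+Vᵢ₊₁*)/2 for 1 ≤ i ≤ k−1, and V_k*V_k ≤ Z. -/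
open Matrix ComplexOrder

/-- `α_k = 1 + 1/(2^k - 1)`. -/
noncomputable def alphaIM (k : ℕ) : ℝ := 1 + 1 / (2 ^ k - 1)

/-- Feasibility of `(V₁, …, V_k, Z)` for the primal SDP defining the iterated mean
divergence: `Z ≥ 0`, `V₁ + V₁* ≥ 0`, `Vᵢ* Vᵢ ≤ (Vᵢ₊₁ + Vᵢ₊₁*)/2` for `1 ≤ i ≤ k-1`, and
`V_k* V_k ≤ Z`.  The matrices are indexed by `ℕ`, with only indices `1, …, k` relevant. -/
def QimFeasible {n : Type*} [Fintype n] (k : ℕ)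
    (V : ℕ → Matrix n n ℂ) (Z : Matrix n n ℂ) : Prop :=
  Z.PosSemidef ∧
  (V 1 + (V 1)ᴴ).PosSemidef ∧
  (∀ i : ℕ, 1 ≤ i → i < k →
    ((2 : ℂ)⁻¹ • (V (i + 1) + (V (i + 1))ᴴ) - (V i)ᴴ * V i).PosSemidef) ∧
  (Z - (V k)ᴴ * V k).PosSemidef

/-- The objective `α_k · Re tr(ρ (V₁+V₁*)/2) − (α_k − 1) · Re tr(σ Z)`. -/
noncomputable def QimObj {n : Type*} [Fintype n] (k : ℕ)
    (ρ σ : Matrix n n ℂ) (V : ℕ → Matrix n n ℂ) (Z : Matrix n n ℂ) : ℝ :=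
  alphaIM k * ((ρ * (V 1 + (V 1)ᴴ)).trace.re / 2) - (alphaIM k - 1) * (σ * Z).trace.re

/-- The iterated mean quantity `Q^{im}_{α_k}(ρ‖σ)`. -/
noncomputable def Qim {n : Type*} [Fintype n] (k : ℕ) (ρ σ : Matrix n n ℂ) : ℝ :=
  sSup {q : ℝ | ∃ V Z, QimFeasible k V Z ∧ q = QimObj k ρ σ V Z}

/-- The iterated mean divergence `D^{im}_{α_k}(ρ‖σ) = (1/(α_k−1)) log Q^{im}_{α_k}(ρ‖σ)`. -/
noncomputable def Dim {n : Type*} [Fintype n] (k : ℕ) (ρ σ : Matrix n n ℂ) : ℝ :=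
  (1 / (alphaIM k - 1)) * Real.log (Qim k ρ σ)

/-- Real powers of a Hermitian matrix, via the spectral decomposition (continuous
functional calculus); junk value `0` on non-Hermitian matrices. -/
noncomputable def mrpow {n : Type*} [Fintype n] [DecidableEq n]
    (A : Matrix n n ℂ) (r : ℝ) : Matrix n n ℂ :=
  if h : A.IsHermitian then
    (h.eigenvectorUnitary : Matrix n n ℂ) *
      Matrix.diagonal (fun i => ((h.eigenvalues i ^ r : ℝ) : ℂ)) *
      (h.eigenvectorUnitary : Matrix n n ℂ)ᴴ
  else 0

/-- Matrix geometric mean `A # B = A^{1/2} (A^{-1/2} B A^{-1/2})^{1/2} A^{1/2}`. -/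
noncomputable def geomMean {n : Type*} [Fintype n] [DecidableEq n]
    (A B : Matrix n n ℂ) : Matrix n n ℂ :=
  mrpow A (1/2) * mrpow (mrpow A (-(1/2)) * B * mrpow A (-(1/2))) (1/2) * mrpow A (1/2)

/-- Partial trace over the first tensor factor. -/
noncomputable def ptrFst {α β : Type*} [Fintype α] (M : Matrix (α × β) (α × β) ℂ) :
    Matrix β β ℂ :=
  Matrix.of fun b b' => ∑ a, M (a, b) (a, b')

/-- Iterated geometric mean: `iterGeom σ A k = A₁ # (A₂ # (⋯ # (A_k # σ)⋯))`. -/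
noncomputable def iterGeom {n : Type*} [Fintype n] [DecidableEq n]
    (σ : Matrix n n ℂ) : (ℕ → Matrix n n ℂ) → ℕ → Matrix n n ℂ
  | _, 0 => σ
  | A, (j + 1) => geomMean (A 1) (iterGeom σ (fun i => A (i + 1)) j)


/-!
Rescaling `(Vᵢ, Z) ↦ (c ^ 2 ^ (i - 1) • Vᵢ, c ^ 2 ^ k • Z)` with `c ≥ 0` preserves feasibility and
multiplies `T = Re tr(ρ V₁)` by `c` and `s = Re tr(σ Z)` by `c ^ 2 ^ k`. Since
`(α - 1) 2 ^ k = α`, Young's inequality `α T - (α - 1) s ≤ T ^ α s ^ (1 - α)` shows that each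
value of the objective is dominated by the normalized value `T ^ α` of the rescaled point with
`s = 1`, and conversely `c = T ^ (α - 1)` turns a normalized point into one whose objective is
exactly `T ^ α`. When `s = 0`, iterated Cauchy–Schwarz, `T ^ 2 ^ k ≤ Re tr(ρ Z)`, and
`supp ρ ⊆ supp σ` give `T = 0`, so the objective vanishes.
-/

namespace Matrix

variable {n : Type*} [Fintype n]

lemma re_trace_mul_smul (M N : Matrix n n ℂ) (c : ℝ) :
    (M * (c • N)).trace.re = c * (M * N).trace.re := by
  rw [Matrix.mul_smul, trace_smul, Complex.smul_re, smul_eq_mul]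

lemma IsHermitian.re_trace_mul_conjTranspose {ρ : Matrix n n ℂ} (hρ : ρ.IsHermitian)
    (V : Matrix n n ℂ) : (ρ * Vᴴ).trace.re = (ρ * V).trace.re := by
  rw [← hρ.eq, ← conjTranspose_mul, trace_conjTranspose, trace_mul_comm, hρ.eq]
  exact Complex.conj_re _

lemma IsHermitian.re_trace_mul_add_conjTranspose {ρ : Matrix n n ℂ} (hρ : ρ.IsHermitian)
    (V : Matrix n n ℂ) : (ρ * (V + Vᴴ)).trace.re / 2 = (ρ * V).trace.re := by
  rw [Matrix.mul_add, trace_add, Complex.add_re, hρ.re_trace_mul_conjTranspose]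
  ring

lemma PosSemidef.re_trace_mul_nonneg {ρ M : Matrix n n ℂ} (hρ : ρ.PosSemidef)
    (hM : M.PosSemidef) : 0 ≤ (ρ * M).trace.re := by
  classical
  obtain ⟨B, rfl⟩ : ∃ B : Matrix n n ℂ, M = star B * B := by
    open scoped MatrixOrder in exact CStarAlgebra.nonneg_iff_eq_star_mul_self.mp hM.nonneg
  rw [star_eq_conjTranspose, ← Matrix.mul_assoc, trace_mul_cycle]
  exact (Complex.nonneg_iff.mp (hρ.mul_mul_conjTranspose_same B).trace_nonneg).1

lemma PosSemidef.re_trace_mul_mono {ρ A B : Matrix n n ℂ} (hρ : ρ.PosSemidef)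
    (h : (B - A).PosSemidef) : (ρ * A).trace.re ≤ (ρ * B).trace.re := by
  have := hρ.re_trace_mul_nonneg h
  rw [Matrix.mul_sub, trace_sub, Complex.sub_re] at this
  linarith

lemma PosSemidef.sq_re_trace_mul_le {ρ : Matrix n n ℂ} (hρ : ρ.PosSemidef) (V : Matrix n n ℂ) :
    (ρ * V).trace.re ^ 2 ≤ ρ.trace.re * (ρ * (Vᴴ * V)).trace.re := by
  classical
  have hquad : ∀ t : ℝ, 0 ≤ ρ.trace.re * (t * t) + (-2 * (ρ * V).trace.re) * t
      + (ρ * (Vᴴ * V)).trace.re := by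
    intro t
    set W : Matrix n n ℂ := V - t • (1 : Matrix n n ℂ)
    have h := hρ.re_trace_mul_nonneg (posSemidef_conjTranspose_mul_self W)
    have hexp : Wᴴ * W = Vᴴ * V - t • V - t • Vᴴ + (t * t) • (1 : Matrix n n ℂ) := by
      simp only [W, conjTranspose_sub, conjTranspose_smul, conjTranspose_one, star_trivial,
        Matrix.sub_mul, Matrix.mul_sub, Matrix.smul_mul, Matrix.mul_smul, Matrix.mul_one,
        Matrix.one_mul]
      module
    rw [hexp, Matrix.mul_add, Matrix.mul_sub, Matrix.mul_sub, trace_add, trace_sub, trace_sub]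
      at h
    simp only [Complex.add_re, Complex.sub_re, re_trace_mul_smul, Matrix.mul_one,
      hρ.1.re_trace_mul_conjTranspose] at h
    linarith
  have := discrim_le_zero hquad
  rw [discrim] at this
  nlinarith

lemma PosSemidef.mul_eq_zero_of_re_trace_mul_eq_zero [DecidableEq n] {σ Z : Matrix n n ℂ}
    (hσ : σ.PosSemidef) (hZ : Z.PosSemidef) (h : (σ * Z).trace.re = 0) : σ * Z = 0 := by
  obtain ⟨C, rfl⟩ : ∃ C : Matrix n n ℂ, σ = star C * C := by
    open scoped MatrixOrder in exact CStarAlgebra.nonneg_iff_eq_star_mul_self.mp hσ.nonneg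
  obtain ⟨B, rfl⟩ : ∃ B : Matrix n n ℂ, Z = star B * B := by
    open scoped MatrixOrder in exact CStarAlgebra.nonneg_iff_eq_star_mul_self.mp hZ.nonneg
  simp only [star_eq_conjTranspose] at h ⊢
  have htrace : ((C * Bᴴ)ᴴ * (C * Bᴴ)).trace = (Cᴴ * C * (Bᴴ * B)).trace := by
    rw [conjTranspose_mul, conjTranspose_conjTranspose, Matrix.mul_assoc, ← Matrix.mul_assoc Cᴴ,
      trace_mul_comm, Matrix.mul_assoc, Matrix.mul_assoc]
  have hCB : C * Bᴴ = 0 := by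
    rw [← trace_conjTranspose_mul_self_eq_zero_iff, htrace]
    have him := (Complex.nonneg_iff.mp
      ((posSemidef_conjTranspose_mul_self (C * Bᴴ)).trace_nonneg)).2
    rw [htrace] at him
    exact Complex.ext h him.symm
  rw [Matrix.mul_assoc, ← Matrix.mul_assoc C, hCB, Matrix.zero_mul, Matrix.mul_zero]

lemma mul_eq_zero_of_mul_eq_zero_of_ker_le {R m : Type*} [Semiring R] [Fintype m]
    {σ ρ : Matrix n n R} {N : Matrix n m R} (hker : ∀ x, σ *ᵥ x = 0 → ρ *ᵥ x = 0)
    (h : σ * N = 0) : ρ * N = 0 :=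
  ext_iff_mulVec.mpr fun v => by
    rw [← mulVec_mulVec, hker _ (by rw [mulVec_mulVec, h, zero_mulVec]), zero_mulVec]

lemma PosSemidef.re_trace_mul_conjTranspose_mul_self_le {ρ A B : Matrix n n ℂ}
    (hρ : ρ.PosSemidef) (h : ((2 : ℂ)⁻¹ • (B + Bᴴ) - Aᴴ * A).PosSemidef) :
    (ρ * (Aᴴ * A)).trace.re ≤ (ρ * B).trace.re := by
  have hhalf : (ρ * ((2 : ℂ)⁻¹ • (B + Bᴴ))).trace.re = (ρ * (B + Bᴴ)).trace.re / 2 := by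
    rw [Matrix.mul_smul, trace_smul, smul_eq_mul, Complex.mul_re]
    norm_num
    ring
  simpa only [hhalf, hρ.1.re_trace_mul_add_conjTranspose] using hρ.re_trace_mul_mono h

lemma PosSemidef.re_trace_pos {σ : Matrix n n ℂ} (hσ : σ.PosSemidef) (hne : σ ≠ 0) :
    0 < σ.trace.re := by
  classical
  obtain ⟨hre, him⟩ := Complex.nonneg_iff.mp hσ.trace_nonneg
  exact hre.lt_of_ne fun h => hne (hσ.trace_eq_zero_iff.mp (Complex.ext h.symm him.symm))

end Matrix

lemma one_lt_alphaIM {k : ℕ} (hk : 1 ≤ k) : 1 < alphaIM k := by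
  have : (1 : ℝ) < 2 ^ k := one_lt_pow₀ one_lt_two (by omega)
  unfold alphaIM
  have : 0 < 1 / ((2 : ℝ) ^ k - 1) := by apply div_pos <;> linarith
  linarith

lemma alphaIM_sub_one_mul_two_pow {k : ℕ} (hk : 1 ≤ k) : (alphaIM k - 1) * 2 ^ k = alphaIM k := by
  have : (2 : ℝ) ^ k - 1 ≠ 0 := (sub_pos.mpr (one_lt_pow₀ one_lt_two (by omega))).ne'
  unfold alphaIM
  field_simp
  ring

/-- Young's inequality, obtained from Bernoulli's inequality at `x / y`. -/
lemma mul_sub_le_rpow_mul_rpow_one_sub {x y p : ℝ} (hx : 0 ≤ x) (hy : 0 < y) (hp : 1 ≤ p) :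
    p * x - (p - 1) * y ≤ x ^ p * y ^ (1 - p) := by
  have hbern := one_add_mul_self_le_rpow_one_add (s := x / y - 1) (by
    have := div_nonneg hx hy.le; linarith) hp
  rw [add_sub_cancel, Real.div_rpow hx hy.le] at hbern
  calc p * x - (p - 1) * y = y * (1 + p * (x / y - 1)) := by field_simp; ring
    _ ≤ y * (x ^ p / y ^ p) := mul_le_mul_of_nonneg_left hbern hy.le
    _ = x ^ p * y ^ (1 - p) := by rw [Real.rpow_sub hy, Real.rpow_one]; ring

section

variable {n : Type*} [Fintype n] {k : ℕ} {V : ℕ → Matrix n n ℂ} {Z : Matrix n n ℂ}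

lemma qimObj_eq {ρ : Matrix n n ℂ} (hρ : ρ.IsHermitian) (σ : Matrix n n ℂ) :
    QimObj k ρ σ V Z = alphaIM k * (ρ * V 1).trace.re - (alphaIM k - 1) * (σ * Z).trace.re := by
  rw [QimObj, hρ.re_trace_mul_add_conjTranspose]

lemma qimFeasible_zero_smul_one [DecidableEq n] {c : ℝ} (hc : 0 ≤ c) :
    QimFeasible k (0 : ℕ → Matrix n n ℂ) (c • 1) := by
  refine ⟨PosSemidef.one.smul hc, ?_, fun i _ _ => ?_, ?_⟩ <;>
    simp [PosSemidef.zero, PosSemidef.one.smul hc]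

namespace QimFeasible

lemma re_trace_mul_nonneg (hf : QimFeasible k V Z) {ρ : Matrix n n ℂ} (hρ : ρ.PosSemidef) :
    0 ≤ (ρ * V 1).trace.re := by
  rw [← hρ.1.re_trace_mul_add_conjTranspose]
  exact div_nonneg (hρ.re_trace_mul_nonneg hf.2.1) zero_le_two

lemma pow_re_trace_mul_le (hk : 1 ≤ k) (hf : QimFeasible k V Z) {ρ : Matrix n n ℂ}
    (hρ : ρ.PosSemidef) (hρtr : ρ.trace = 1) :
    (ρ * V 1).trace.re ^ 2 ^ k ≤ (ρ * Z).trace.re := by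
  have hcs (W : Matrix n n ℂ) : (ρ * W).trace.re ^ 2 ≤ (ρ * (Wᴴ * W)).trace.re := by
    simpa [hρtr] using hρ.sq_re_trace_mul_le W
  have hchain : ∀ m j, 1 ≤ j → j + m = k →
      (ρ * V j).trace.re ^ 2 ^ (m + 1) ≤ (ρ * Z).trace.re := by
    intro m
    induction m with
    | zero =>
      rintro j - rfl
      simpa using (hcs _).trans (hρ.re_trace_mul_mono hf.2.2.2)
    | succ m ih =>
      intro j hj hjk
      have hstep := (hcs _).trans
        (hρ.re_trace_mul_conjTranspose_mul_self_le (hf.2.2.1 j hj (by omega)))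
      rw [pow_succ' 2 (m + 1), pow_mul]
      exact (pow_le_pow_left₀ (sq_nonneg _) hstep _).trans (ih (j + 1) (by omega) (by omega))
  simpa [Nat.sub_add_cancel hk] using hchain (k - 1) 1 le_rfl (by omega)

lemma smul (hk : 1 ≤ k) (hf : QimFeasible k V Z) {c : ℝ} (hc : 0 ≤ c) :
    QimFeasible k (fun i => c ^ 2 ^ (i - 1) • V i) (c ^ 2 ^ k • Z) := by
  obtain ⟨hZ, hV1, hstep, hlast⟩ := hf
  have hsq {i : ℕ} (hi : 1 ≤ i) : c ^ 2 ^ (i - 1) * c ^ 2 ^ (i - 1) = c ^ 2 ^ i := by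
    rw [← pow_add, ← two_mul, ← pow_succ', Nat.sub_add_cancel hi]
  have hconj (a : ℝ) (A : Matrix n n ℂ) : (a • A)ᴴ = a • Aᴴ := by
    rw [conjTranspose_smul, star_trivial]
  refine ⟨hZ.smul (by positivity), ?_, fun i hi hik => ?_, ?_⟩
  · simpa only [hconj, ← smul_add] using hV1.smul (by positivity : 0 ≤ c ^ 2 ^ (1 - 1))
  · convert (hstep i hi hik).smul (by positivity : 0 ≤ c ^ 2 ^ i) using 1
    simp only [hconj, Matrix.smul_mul, Matrix.mul_smul, smul_smul, hsq hi, Nat.add_sub_cancel]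
    module
  · convert hlast.smul (by positivity : 0 ≤ c ^ 2 ^ k) using 1
    simp only [hconj, Matrix.smul_mul, Matrix.mul_smul, smul_smul, hsq hk]
    module

lemma exists_normalized_ge_of_pos (hk : 1 ≤ k) (hf : QimFeasible k V Z) {ρ σ : Matrix n n ℂ}
    (hρ : ρ.PosSemidef) (hs : 0 < (σ * Z).trace.re) :
    ∃ V' Z', QimFeasible k V' Z' ∧ (σ * Z').trace.re = 1 ∧
      QimObj k ρ σ V Z ≤ ((ρ * (V' 1 + (V' 1)ᴴ)).trace.re / 2) ^ alphaIM k := by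
  set s := (σ * Z).trace.re
  set c := s ^ (-(1 / (2 : ℝ) ^ k))
  have hc : 0 ≤ c := Real.rpow_nonneg hs.le _
  have hcpow : c ^ 2 ^ k = s⁻¹ := by
    rw [← Real.rpow_natCast, ← Real.rpow_mul hs.le]
    push_cast
    rw [neg_mul, one_div_mul_cancel (by positivity), Real.rpow_neg_one]
  have hcα : c ^ alphaIM k = s ^ (1 - alphaIM k) := by
    have hαN := alphaIM_sub_one_mul_two_pow hk
    rw [← Real.rpow_mul hs.le]
    congr 1
    field_simp
    linarith
  refine ⟨_, _, hf.smul hk hc, ?_, ?_⟩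
  · rw [re_trace_mul_smul, hcpow, inv_mul_cancel₀ hs.ne']
  · rw [qimObj_eq hρ.1, hρ.1.re_trace_mul_add_conjTranspose, re_trace_mul_smul, Nat.sub_self,
      pow_zero, pow_one, Real.mul_rpow hc (hf.re_trace_mul_nonneg hρ), hcα, mul_comm (s ^ _)]
    exact mul_sub_le_rpow_mul_rpow_one_sub (hf.re_trace_mul_nonneg hρ) hs (one_lt_alphaIM hk).le

lemma exists_normalized_ge [DecidableEq n] (hk : 1 ≤ k) (hf : QimFeasible k V Z)
    {ρ σ : Matrix n n ℂ} (hρ : ρ.PosSemidef) (hρtr : ρ.trace = 1) (hσ : σ.PosSemidef)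
    (hker : ∀ x, σ *ᵥ x = 0 → ρ *ᵥ x = 0) :
    ∃ V' Z', QimFeasible k V' Z' ∧ (σ * Z').trace.re = 1 ∧
      QimObj k ρ σ V Z ≤ ((ρ * (V' 1 + (V' 1)ᴴ)).trace.re / 2) ^ alphaIM k := by
  rcases (hσ.re_trace_mul_nonneg hf.1).eq_or_lt with hs | hs
  · have hρZ : (ρ * Z).trace.re = 0 := by
      rw [mul_eq_zero_of_mul_eq_zero_of_ker_le hker
        (hσ.mul_eq_zero_of_re_trace_mul_eq_zero hf.1 hs.symm)]
      simp
    have hT : (ρ * V 1).trace.re = 0 :=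
      pow_eq_zero_iff (by positivity) |>.mp <| le_antisymm
        (hρZ ▸ hf.pow_re_trace_mul_le hk hρ hρtr) (pow_nonneg (hf.re_trace_mul_nonneg hρ) _)
    have hσ0 : σ ≠ 0 := by
      rintro rfl
      have hρ0 : ρ = 0 := ext_iff_mulVec.mpr fun x => by simpa using hker x (zero_mulVec x)
      simp [hρ0] at hρtr
    have htr := hσ.re_trace_pos hσ0
    refine ⟨0, σ.trace.re⁻¹ • 1, qimFeasible_zero_smul_one (inv_nonneg.mpr htr.le), ?_, ?_⟩
    · rw [re_trace_mul_smul, Matrix.mul_one, inv_mul_cancel₀ htr.ne']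
    · rw [qimObj_eq hρ.1, hT, ← hs]
      simpa using Real.rpow_nonneg le_rfl (alphaIM k)
  · exact hf.exists_normalized_ge_of_pos hk hρ hs

lemma exists_qimObj_eq_of_normalized (hk : 1 ≤ k) (hf : QimFeasible k V Z)
    {ρ σ : Matrix n n ℂ} (hρ : ρ.PosSemidef) (hs : (σ * Z).trace.re = 1) :
    ∃ V' Z', QimFeasible k V' Z' ∧
      QimObj k ρ σ V' Z' = ((ρ * (V 1 + (V 1)ᴴ)).trace.re / 2) ^ alphaIM k := by
  set T := (ρ * V 1).trace.re
  have hT : 0 ≤ T := hf.re_trace_mul_nonneg hρ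
  set c := T ^ (alphaIM k - 1)
  have hc : 0 ≤ c := Real.rpow_nonneg hT _
  have hcT : c * T = T ^ alphaIM k := by
    conv_rhs => rw [← sub_add_cancel (alphaIM k) 1,
      Real.rpow_add' hT (by linarith [one_lt_alphaIM hk]), Real.rpow_one]
  have hcpow : c ^ 2 ^ k = T ^ alphaIM k := by
    rw [← Real.rpow_mul_natCast hT]
    push_cast
    rw [alphaIM_sub_one_mul_two_pow hk]
  refine ⟨_, _, hf.smul hk hc, ?_⟩
  rw [qimObj_eq hρ.1, hρ.1.re_trace_mul_add_conjTranspose, re_trace_mul_smul, re_trace_mul_smul,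
    Nat.sub_self, pow_zero, pow_one, hs, hcT, hcpow]
  ring

end QimFeasible

end

/-- rescaled primal form of `Q^{im}_{α_k}`. -/
theorem stmt_0 (d k : ℕ) (hk : 1 ≤ k) (ρ σ : Matrix (Fin d) (Fin d) ℂ)
    (hρ : ρ.PosSemidef) (hρtr : ρ.trace = 1) (hσ : σ.PosSemidef)
    (hsupp : ∀ x : Fin d → ℂ, σ *ᵥ x = 0 → ρ *ᵥ x = 0) :
    Qim k ρ σ =
      sSup {q : ℝ | ∃ (V : ℕ → Matrix (Fin d) (Fin d) ℂ) (Z : Matrix (Fin d) (Fin d) ℂ),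
        QimFeasible k V Z ∧ (σ * Z).trace.re = 1 ∧
        q = ((ρ * (V 1 + (V 1)ᴴ)).trace.re / 2) ^ alphaIM k} := by
  refine csSup_eq_csSup_of_forall_exists_le ?_ ?_
  · rintro _ ⟨V, Z, hf, rfl⟩
    obtain ⟨V', Z', hf', hs', hle⟩ := hf.exists_normalized_ge hk hρ hρtr hσ hsupp
    exact ⟨_, ⟨V', Z', hf', hs', rfl⟩, hle⟩
  · rintro _ ⟨V, Z, hf, hs, rfl⟩
    obtain ⟨V', Z', hf', heq⟩ := hf.exists_qimObj_eq_of_normalized hk hρ hs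
    exact ⟨_, ⟨V', Z', hf', rfl⟩, heq.ge⟩
end

section
/- For every integer k ≥ 1, every complex d×d density matrix ρ, every positive semidefinite σ with supp(ρ) ⊆ supp(σ), and every positive definite Hermitian d×d matrix ω, one has α_k·Re tr(ρω) − (α_k − 1)·Re tr(σ·ω^{2^k}) ≤ Q^{im}_{α_k}(ρ‖σ); in particular the choice V_i = ω^{2^{i−1}} for 1 ≤ i ≤ k and Z = ω^{2^k} is a feasible point of the defining program of Q^{im}_{α_k}(ρ‖σ). -/
/-! With `Vᵢ = ω^{2^{i-1}}` and `Z = ω^{2^k}` every constraint of the program holds with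
equality except `V₁ + V₁* = 2ω ≥ 0`, so the point is feasible and the inequality is `le_csSup`,
provided the objective is bounded above on the feasible set (otherwise `sSup` is `0`).

For the bound: since `ker σ ⊆ ker ρ`, writing `σ = S*S`, `ρ = R*R` gives `R = TS`, hence
`ρ ≤ ‖T*T‖ σ`. Pairing the AM–GM inequality `t (V + V*) ≤ 1 + t² V*V` with `ρ` and chaining
it through the constraints gives, for `0 < t ≤ 2`,
`t Re tr ρ(V₁ + V₁*) ≤ k tr ρ + t² Re tr ρZ ≤ k tr ρ + t² ‖T*T‖ Re tr σZ`;
for the right `t` the `Z`-terms of the objective cancel. -/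

open Matrix ComplexOrder

open scoped MatrixOrder

theorem smul_add_star_le_one_add {A : Type*} [Ring A] [StarRing A] [PartialOrder A]
    [StarOrderedRing A] [Algebra ℝ A] [StarModule ℝ A] (a : A) (t : ℝ) :
    t • (a + star a) ≤ 1 + t ^ 2 • (star a * a) := by
  have h := star_mul_self_nonneg (1 - t • a)
  have expand : star (1 - t • a) * (1 - t • a) = 1 + t ^ 2 • (star a * a) - t • (a + star a) := by
    simp only [star_sub, star_one, star_smul, star_trivial, sub_mul, mul_sub, one_mul, mul_one,
      smul_mul_smul_comm, smul_add, pow_two]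
    abel
  rwa [expand, sub_nonneg] at h

theorem LinearMap.exists_comp_eq_of_ker_le {K V W U : Type*} [Field K] [AddCommGroup V]
    [Module K V] [AddCommGroup W] [Module K W] [AddCommGroup U] [Module K U]
    {f : V →ₗ[K] W} {g : V →ₗ[K] U} (h : LinearMap.ker f ≤ LinearMap.ker g) :
    ∃ T : W →ₗ[K] U, T ∘ₗ f = g := by
  obtain ⟨T, hT⟩ := LinearMap.exists_extend ((LinearMap.ker f).liftQ g h ∘ₗ
    f.quotKerEquivRange.symm.toLinearMap)
  refine ⟨T, LinearMap.ext fun x => ?_⟩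
  simpa using LinearMap.congr_fun hT ⟨f x, LinearMap.mem_range_self f x⟩

theorem Matrix.exists_eq_mul_of_mulVec_eq_zero {K m n : Type*} [Field K] [Fintype m]
    [Fintype n] [DecidableEq m] [DecidableEq n] {A B : Matrix m n K}
    (h : ∀ x, B *ᵥ x = 0 → A *ᵥ x = 0) : ∃ T : Matrix m m K, A = T * B := by
  obtain ⟨T, hT⟩ := LinearMap.exists_comp_eq_of_ker_le (f := B.toLin') (g := A.toLin') h
  refine ⟨LinearMap.toMatrix' T, Matrix.toLin'.injective ?_⟩
  rw [Matrix.toLin'_mul, Matrix.toLin'_toMatrix', hT]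

namespace Matrix

variable {n : Type*} [Fintype n] [DecidableEq n]

theorem PosSemidef.exists_le_smul_of_mulVec_eq_zero {ρ σ : Matrix n n ℂ} (hρ : ρ.PosSemidef)
    (hσ : σ.PosSemidef) (h : ∀ x, σ *ᵥ x = 0 → ρ *ᵥ x = 0) : ∃ c : ℝ, 0 ≤ c ∧ ρ ≤ c • σ := by
  obtain ⟨S, rfl⟩ := CStarAlgebra.nonneg_iff_eq_star_mul_self.mp hσ.nonneg
  obtain ⟨R, rfl⟩ := CStarAlgebra.nonneg_iff_eq_star_mul_self.mp hρ.nonneg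
  simp only [star_eq_conjTranspose, conjTranspose_mul_self_mulVec_eq_zero] at h
  obtain ⟨T, rfl⟩ := exists_eq_mul_of_mulVec_eq_zero h
  open scoped Matrix.Norms.L2Operator in
  refine ⟨‖star T * T‖, norm_nonneg _, ?_⟩
  simpa [star_mul, Matrix.mul_assoc] using
    CStarAlgebra.star_left_conjugate_le_norm_smul (a := S) (b := star T * T)

theorem PosSemidef.trace_mul_nonneg {A B : Matrix n n ℂ} (hA : A.PosSemidef)
    (hB : B.PosSemidef) : 0 ≤ (A * B).trace := by
  obtain ⟨C, rfl⟩ := CStarAlgebra.nonneg_iff_eq_star_mul_self.mp hB.nonneg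
  rw [star_eq_conjTranspose, ← Matrix.mul_assoc, trace_mul_cycle]
  exact (hA.mul_mul_conjTranspose_same C).trace_nonneg

theorem PosSemidef.re_trace_mul_le_re_trace_mul {ρ A B : Matrix n n ℂ} (hρ : ρ.PosSemidef)
    (h : A ≤ B) : (ρ * A).trace.re ≤ (ρ * B).trace.re := by
  have := (Complex.nonneg_iff.mp (hρ.trace_mul_nonneg h)).1
  rw [Matrix.mul_sub, trace_sub, Complex.sub_re, sub_nonneg] at this
  exact this

end Matrix

theorem mul_le_of_chain {x b : ℕ → ℝ} {k : ℕ} {a t y : ℝ} (hk : 1 ≤ k) (ht : 0 < t)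
    (ht2 : t ≤ 2) (ha : 0 ≤ a) (hy : 0 ≤ y) (hamgm : ∀ i, t * x i ≤ a + t ^ 2 * b i)
    (hstep : ∀ i, 1 ≤ i → i < k → b i ≤ x (i + 1) / 2) (hlast : b k ≤ y) :
    t * x 1 ≤ k * a + t ^ 2 * y := by
  have key : ∀ j < k, t * x (k - j) ≤ (j + 1) * a + t ^ 2 * y := by
    intro j
    induction j with
    | zero =>
      intro _
      simpa using (hamgm k).trans (by gcongr)
    | succ j ih =>
      intro hj
      have hprev := ih (by omega)
      have hb := hstep (k - (j + 1)) (by omega) (by omega)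
      rw [show k - (j + 1) + 1 = k - j by omega] at hb
      have hP : 0 ≤ (j + 1) * a + t ^ 2 * y := by positivity
      push_cast
      nlinarith [hamgm (k - (j + 1))]
  simpa [Nat.sub_sub_self hk, Nat.cast_sub hk] using key (k - 1) (by omega)

namespace QimFeasible

variable {n : Type*} [Fintype n] [DecidableEq n] {k : ℕ} {V : ℕ → Matrix n n ℂ}
  {Z : Matrix n n ℂ}

theorem mul_re_trace_mul_le (hVZ : QimFeasible k V Z) (hk : 1 ≤ k) {ρ : Matrix n n ℂ}
    (hρ : ρ.PosSemidef) {t : ℝ} (ht : 0 < t) (ht2 : t ≤ 2) :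
    t * (ρ * (V 1 + (V 1)ᴴ)).trace.re ≤ k * ρ.trace.re + t ^ 2 * (ρ * Z).trace.re := by
  obtain ⟨hZ, -, hstep, hlast⟩ := hVZ
  refine mul_le_of_chain (x := fun i => (ρ * (V i + (V i)ᴴ)).trace.re)
    (b := fun i => (ρ * ((V i)ᴴ * V i)).trace.re) hk ht ht2
    (Complex.nonneg_iff.mp hρ.trace_nonneg).1
    (Complex.nonneg_iff.mp (hρ.trace_mul_nonneg hZ)).1 (fun i => ?_)
    (fun i h1 h2 => ?_) (hρ.re_trace_mul_le_re_trace_mul hlast)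
  · have h := hρ.re_trace_mul_le_re_trace_mul (smul_add_star_le_one_add (V i) t)
    simp only [Matrix.mul_add, Matrix.mul_one, Matrix.mul_smul, trace_add, trace_smul,
      Complex.add_re, Complex.smul_re, smul_eq_mul, star_eq_conjTranspose] at h
    simpa only [Matrix.mul_add, trace_add, Complex.add_re, mul_add] using h
  · have h := hρ.re_trace_mul_le_re_trace_mul (hstep i h1 h2)
    rw [Matrix.mul_smul, trace_smul, smul_eq_mul, show (2 : ℂ)⁻¹ = ((2⁻¹ : ℝ) : ℂ) by simp,
      Complex.re_ofReal_mul] at h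
    linarith

end QimFeasible

theorem alphaIM_sub_one_pos {k : ℕ} (hk : 1 ≤ k) : 0 < alphaIM k - 1 := by
  have : (1 : ℝ) < 2 ^ k := one_lt_pow₀ one_lt_two (by omega)
  rw [alphaIM, add_sub_cancel_left]
  exact one_div_pos.mpr (sub_pos.mpr this)

theorem bddAbove_QimObj {n : Type*} [Fintype n] [DecidableEq n] {k : ℕ} (hk : 1 ≤ k)
    {ρ σ : Matrix n n ℂ} (hρ : ρ.PosSemidef) (hσ : σ.PosSemidef)
    (hsupp : ∀ x, σ *ᵥ x = 0 → ρ *ᵥ x = 0) :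
    BddAbove {q : ℝ | ∃ V Z, QimFeasible k V Z ∧ q = QimObj k ρ σ V Z} := by
  obtain ⟨c, hc, hρσ⟩ := hρ.exists_le_smul_of_mulVec_eq_zero hσ hsupp
  set α := alphaIM k with hα_def
  have hα : 0 < α - 1 := alphaIM_sub_one_pos hk
  set t := 2 * (α - 1) / (α * (c + 1))
  have ht : 0 < t := div_pos (by linarith) (by nlinarith)
  have ht2 : t ≤ 2 := by
    rw [div_le_iff₀ (by nlinarith)]
    nlinarith
  -- this choice of `t` makes the `Z`-terms cancel
  have htα : α * t * (c + 1) = 2 * (α - 1) := by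
    have : α ≠ 0 := by linarith
    simp only [t]
    field_simp
  refine ⟨α * k * ρ.trace.re / (2 * t), ?_⟩
  rintro q ⟨V, Z, hVZ, rfl⟩
  have hV := hVZ.mul_re_trace_mul_le hk hρ ht ht2
  have hs : 0 ≤ (σ * Z).trace.re := (Complex.nonneg_iff.mp (hσ.trace_mul_nonneg hVZ.1)).1
  have hρZ : (ρ * Z).trace.re ≤ (c + 1) * (σ * Z).trace.re := by
    have h := hVZ.1.re_trace_mul_le_re_trace_mul hρσ
    rw [trace_mul_comm Z ρ, Matrix.mul_smul, trace_smul, Complex.smul_re, smul_eq_mul,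
      trace_mul_comm Z σ] at h
    linarith
  rw [QimObj, ← hα_def, le_div_iff₀ (by positivity)]
  calc (α * ((ρ * (V 1 + (V 1)ᴴ)).trace.re / 2) - (α - 1) * (σ * Z).trace.re) * (2 * t)
      = α * (t * (ρ * (V 1 + (V 1)ᴴ)).trace.re) - 2 * (α - 1) * t * (σ * Z).trace.re := by ring
    _ ≤ α * (k * ρ.trace.re + t ^ 2 * ((c + 1) * (σ * Z).trace.re))
          - 2 * (α - 1) * t * (σ * Z).trace.re := by
        gcongr
        · linarith
        · exact hV.trans (by gcongr)
    _ = α * k * ρ.trace.re := by rw [← htα]; ring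

theorem pow_two_pow_pred_mul_self {M : Type*} [Monoid M] (a : M) {i : ℕ} (hi : 1 ≤ i) :
    a ^ 2 ^ (i - 1) * a ^ 2 ^ (i - 1) = a ^ 2 ^ i := by
  obtain ⟨j, rfl⟩ := Nat.exists_eq_add_of_le' hi
  rw [Nat.add_sub_cancel, ← pow_two, ← pow_mul, ← pow_succ]

theorem qimFeasible_pow_two_pow {n : Type*} [Fintype n] [DecidableEq n] {k : ℕ} (hk : 1 ≤ k)
    {ω : Matrix n n ℂ} (hω : ω.PosSemidef) :
    QimFeasible k (fun i => ω ^ (2 ^ (i - 1))) (ω ^ (2 ^ k)) := by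
  have hherm : ∀ m : ℕ, (ω ^ m)ᴴ = ω ^ m := fun m => (hω.1.pow m).eq
  have half_add_self : ∀ X : Matrix n n ℂ, (2 : ℂ)⁻¹ • (X + X) = X := fun X => by
    rw [← two_smul ℂ X, smul_smul, inv_mul_cancel₀ two_ne_zero, one_smul]
  refine ⟨hω.pow _, by simpa using hω.add hω.conjTranspose, fun i hi _ => ?_, ?_⟩
  · simp only [Nat.add_sub_cancel]
    rw [hherm, hherm, half_add_self, pow_two_pow_pred_mul_self ω hi, sub_self]
    exact PosSemidef.zero
  · dsimp only
    rw [hherm, pow_two_pow_pred_mul_self ω hk, sub_self]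
    exact PosSemidef.zero

theorem stmt_5_general (d k : ℕ) (hk : 1 ≤ k) (ρ σ ω : Matrix (Fin d) (Fin d) ℂ)
    (hρ : ρ.PosSemidef) (hσ : σ.PosSemidef)
    (hsupp : ∀ x : Fin d → ℂ, σ *ᵥ x = 0 → ρ *ᵥ x = 0)
    (hω : ω.PosDef) :
    QimFeasible k (fun i => ω ^ (2 ^ (i - 1))) (ω ^ (2 ^ k)) ∧
    alphaIM k * (ρ * ω).trace.re - (alphaIM k - 1) * (σ * ω ^ (2 ^ k)).trace.re ≤
      Qim k ρ σ := by
  have hfeas := qimFeasible_pow_two_pow hk hω.posSemidef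
  refine ⟨hfeas, le_csSup (bddAbove_QimObj hk hρ hσ hsupp) ⟨_, _, hfeas, ?_⟩⟩
  simp [QimObj, hω.1.eq, Matrix.mul_add, trace_add]

/-- for positive definite `ω`, the point `Vᵢ = ω^{2^{i-1}}`, `Z = ω^{2^k}`
is feasible and its objective value lower bounds `Q^{im}_{α_k}(ρ‖σ)`. -/
theorem stmt_5 (d k : ℕ) (hk : 1 ≤ k) (ρ σ ω : Matrix (Fin d) (Fin d) ℂ)
    (hρ : ρ.PosSemidef) (hρtr : ρ.trace = 1) (hσ : σ.PosSemidef)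
    (hsupp : ∀ x : Fin d → ℂ, σ *ᵥ x = 0 → ρ *ᵥ x = 0)
    (hω : ω.PosDef) :
    QimFeasible k (fun i => ω ^ (2 ^ (i - 1))) (ω ^ (2 ^ k)) ∧
    alphaIM k * (ρ * ω).trace.re - (alphaIM k - 1) * (σ * ω ^ (2 ^ k)).trace.re ≤
      Qim k ρ σ :=
  stmt_5_general d k hk ρ σ ω hρ hσ hsupp hω
end

section
/- Let ρ be a density matrix on ℂ^{d_A}⊗ℂ^{d_B}. Then the optimized iterated mean conditional entropy of order 2 dominates the conditional min-entropy: −2·log( sup { Re tr(ρ·(V+V*)/2) : V a complex matrix on ℂ^{d_A}⊗ℂ^{d_B}, V + V* ≥ 0, Tr_A(V* V) ≤ I_B } ) ≥ −log( sup { Re tr(ρ·M) : M positive semidefinite on ℂ^{d_A}⊗ℂ^{d_B}, Tr_A(M) ≤ I_B } ). -/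
/-!
For every feasible `V` and every real `t`, `0 ≤ tr (ρ (V - t)ᴴ (V - t))` expands to
`t · Re tr (ρ (V + Vᴴ)) ≤ tr (ρ VᴴV) + t²`, and `VᴴV` is feasible for the min-entropy program.
Hence the two suprema `a` and `b` satisfy `2 t a ≤ b + t²` for all `t`; at `t = a` this is
`a² ≤ b`, i.e. `-2 log a ≥ -log b`. Here `a > 0` by a scalar witness, and `b` is finite because
`tr (ρ M) ≤ tr M = tr (Tr_A M) ≤ d_B`.
-/

open Matrix ComplexOrder

section TraceInequalities

variable {n 𝕜 : Type*} [Fintype n] [RCLike 𝕜]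

open scoped MatrixOrder Matrix.Norms.L2Operator in
lemma Matrix.PosSemidef.trace_mul_nonneg_s13 {A B : Matrix n n 𝕜} (hA : A.PosSemidef)
    (hB : B.PosSemidef) : 0 ≤ (A * B).trace := by
  classical
  obtain ⟨C, rfl⟩ := CStarAlgebra.nonneg_iff_eq_star_mul_self.mp hA.nonneg
  rw [star_eq_conjTranspose, Matrix.mul_assoc, trace_mul_comm]
  exact (hB.mul_mul_conjTranspose_same C).trace_nonneg

lemma Matrix.PosSemidef.posSemidef_trace_smul_one_sub [DecidableEq n] {A : Matrix n n 𝕜}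
    (hA : A.PosSemidef) : (A.trace • 1 - A).PosSemidef := by
  set U : Matrix n n 𝕜 := (hA.1.eigenvectorUnitary : Matrix n n 𝕜)
  set d : n → ℝ := hA.1.eigenvalues
  have hU : U * Uᴴ = 1 := Unitary.mul_star_self_of_mem hA.1.eigenvectorUnitary.2
  have hA_eq : A = U * diagonal (fun i => (d i : 𝕜)) * Uᴴ := by
    simpa [Function.comp_def, U, star_eq_conjTranspose] using hA.1.spectral_theorem
  have key : A.trace • 1 - A = U * diagonal (fun i => ((∑ j, d j - d i : ℝ) : 𝕜)) * Uᴴ := by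
    calc A.trace • 1 - A = U * (A.trace • 1 - diagonal (fun i => (d i : 𝕜))) * Uᴴ := by
          rw [Matrix.mul_sub, Matrix.sub_mul, Matrix.mul_smul, Matrix.mul_one, Matrix.smul_mul,
            hU, ← hA_eq]
      _ = _ := by
          rw [hA.1.trace_eq_sum_eigenvalues, smul_one_eq_diagonal, diagonal_sub]
          push_cast
          rfl
  rw [key]
  refine PosSemidef.mul_mul_conjTranspose_same (PosSemidef.diagonal fun i => ?_) _
  simp only [Pi.zero_apply, RCLike.ofReal_nonneg, sub_nonneg]
  exact Finset.single_le_sum (fun j _ => hA.eigenvalues_nonneg j) (Finset.mem_univ i)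

end TraceInequalities

section DensityMatrix

variable {n : Type*} [Fintype n] {ρ : Matrix n n ℂ}

lemma re_trace_mul_le_re_trace [DecidableEq n] (hρ : ρ.PosSemidef) (hρtr : ρ.trace = 1)
    {M : Matrix n n ℂ} (hM : M.PosSemidef) : (ρ * M).trace.re ≤ M.trace.re := by
  have h := (Complex.nonneg_iff.mp
    ((hρtr ▸ hρ.posSemidef_trace_smul_one_sub).trace_mul_nonneg_s13 hM)).1
  rwa [one_smul, Matrix.sub_mul, Matrix.one_mul, trace_sub, Complex.sub_re, sub_nonneg] at h

lemma mul_re_trace_mul_add_conjTranspose_le [DecidableEq n] (hρ : ρ.PosSemidef)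
    (hρtr : ρ.trace = 1) (V : Matrix n n ℂ) (t : ℝ) :
    t * (ρ * (V + Vᴴ)).trace.re ≤ (ρ * (Vᴴ * V)).trace.re + t ^ 2 := by
  have h := (Complex.nonneg_iff.mp
    (hρ.trace_mul_nonneg_s13 (posSemidef_conjTranspose_mul_self (V - (t : ℂ) • 1)))).1
  have expand : (V - (t : ℂ) • 1)ᴴ * (V - (t : ℂ) • 1) =
      Vᴴ * V - (t : ℂ) • (V + Vᴴ) + ((t ^ 2 : ℝ) : ℂ) • 1 := by
    simp only [conjTranspose_sub, conjTranspose_smul, conjTranspose_one, Complex.star_def,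
      Complex.conj_ofReal, Matrix.mul_sub, Matrix.sub_mul, Matrix.mul_smul, Matrix.smul_mul,
      Matrix.mul_one, Matrix.one_mul]
    push_cast
    module
  rw [expand, Matrix.mul_add, Matrix.mul_sub, Matrix.mul_smul, Matrix.mul_smul, Matrix.mul_one,
    trace_add, trace_sub, trace_smul, trace_smul, hρtr] at h
  simp only [Complex.add_re, Complex.sub_re, smul_eq_mul, Complex.re_ofReal_mul,
    mul_one, Complex.ofReal_re] at h
  linarith

end DensityMatrix

section PartialTrace

variable {α β : Type*} [Fintype α]

lemma trace_ptrFst [Fintype β] (M : Matrix (α × β) (α × β) ℂ) : (ptrFst M).trace = M.trace := by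
  simp only [Matrix.trace, ptrFst, diag_apply, of_apply, Fintype.sum_prod_type]
  exact Finset.sum_comm

lemma ptrFst_smul_one [DecidableEq α] [DecidableEq β] (c : ℂ) :
    ptrFst (c • 1 : Matrix (α × β) (α × β) ℂ) = (c * Fintype.card α) • 1 := by
  ext b b'
  by_cases h : b = b'
  · subst h
    simp [ptrFst, mul_comm]
  · simp [ptrFst, one_apply, h]

lemma re_trace_le_card_of_posSemidef_one_sub_ptrFst [Fintype β] [DecidableEq β]
    {M : Matrix (α × β) (α × β) ℂ} (hM : (1 - ptrFst M).PosSemidef) :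
    M.trace.re ≤ Fintype.card β := by
  have h := (Complex.nonneg_iff.mp hM.trace_nonneg).1
  rwa [trace_sub, trace_one, trace_ptrFst, Complex.sub_re, Complex.natCast_re, sub_nonneg] at h

/-- The scalar `V = (card α)^{-1/2} • 1` is feasible and has positive value. -/
lemma exists_feasible_re_trace_mul_add_conjTranspose_pos [Fintype β] [Nonempty α] [DecidableEq α]
    [DecidableEq β] {ρ : Matrix (α × β) (α × β) ℂ} (hρtr : ρ.trace = 1) :
    ∃ V : Matrix (α × β) (α × β) ℂ, (V + Vᴴ).PosSemidef ∧
      ((1 : Matrix β β ℂ) - ptrFst (Vᴴ * V)).PosSemidef ∧ 0 < (ρ * (V + Vᴴ)).trace.re / 2 := by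
  set c : ℝ := (Real.sqrt (Fintype.card α))⁻¹
  have hc : 0 < c := inv_pos.mpr (Real.sqrt_pos.mpr (by exact_mod_cast Fintype.card_pos))
  have hcc : c * c * Fintype.card α = 1 := by
    rw [← mul_inv, Real.mul_self_sqrt (Nat.cast_nonneg _), inv_mul_cancel₀]
    exact_mod_cast Fintype.card_ne_zero
  set V : Matrix (α × β) (α × β) ℂ := (c : ℂ) • 1
  have hV : Vᴴ = V := by simp [V]
  refine ⟨V, ?_, ?_, ?_⟩
  · rw [hV, ← two_smul ℂ V, smul_smul]
    exact PosSemidef.one.smul (by exact_mod_cast (by positivity : (0 : ℝ) ≤ 2 * c))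
  · rw [hV, smul_mul_smul_comm, Matrix.one_mul, ptrFst_smul_one]
    rw [show ((c : ℂ) * c * Fintype.card α) = 1 by exact_mod_cast hcc, one_smul, sub_self]
    exact PosSemidef.zero
  · rw [hV, ← two_smul ℂ V, Matrix.mul_smul, Matrix.mul_smul, Matrix.mul_one, trace_smul,
      trace_smul, hρtr]
    simp [hc]

end PartialTrace

lemma two_mul_log_sSup_le_log {S : Set ℝ} {b : ℝ} (hS : ∃ s ∈ S, 0 < s)
    (h : ∀ s ∈ S, ∀ t : ℝ, 2 * t * s ≤ b + t ^ 2) : 2 * Real.log (sSup S) ≤ Real.log b := by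
  obtain ⟨s₀, hs₀, hs₀_pos⟩ := hS
  have hbdd : BddAbove S := ⟨(b + 1) / 2, fun s hs => by linarith [h s hs 1]⟩
  set a := sSup S
  have ha : 0 < a := hs₀_pos.trans_le (le_csSup hbdd hs₀)
  -- optimizing `t` in `2 t s ≤ b + t²` at `t = a` gives `a² ≤ b`
  have hab : a ≤ (b + a ^ 2) / (2 * a) :=
    csSup_le ⟨s₀, hs₀⟩ fun s hs => by rw [le_div_iff₀ (by positivity)]; linarith [h s hs a]
  rw [le_div_iff₀ (by positivity)] at hab
  calc 2 * Real.log a = Real.log (a ^ 2) := by rw [Real.log_pow, Nat.cast_ofNat]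
    _ ≤ Real.log b := Real.log_le_log (by positivity) (by nlinarith)

/-- the optimized iterated mean conditional entropy of order 2 dominates the
conditional min-entropy. -/
theorem stmt_13 (dA dB : ℕ)
    (ρ : Matrix (Fin dA × Fin dB) (Fin dA × Fin dB) ℂ)
    (hρ : ρ.PosSemidef) (hρtr : ρ.trace = 1) :
    (-2 : ℝ) * Real.log
        (sSup {r : ℝ | ∃ V : Matrix (Fin dA × Fin dB) (Fin dA × Fin dB) ℂ,
          (V + Vᴴ).PosSemidef ∧
          ((1 : Matrix (Fin dB) (Fin dB) ℂ) - ptrFst (Vᴴ * V)).PosSemidef ∧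
          r = (ρ * (V + Vᴴ)).trace.re / 2}) ≥
      -Real.log
        (sSup {r : ℝ | ∃ M : Matrix (Fin dA × Fin dB) (Fin dA × Fin dB) ℂ,
          M.PosSemidef ∧
          ((1 : Matrix (Fin dB) (Fin dB) ℂ) - ptrFst M).PosSemidef ∧
          r = (ρ * M).trace.re}) := by
  have : Nonempty (Fin dA) :=
    (isEmpty_or_nonempty _).resolve_left fun _ => by simp [Matrix.trace] at hρtr
  have hbdd : BddAbove {r : ℝ | ∃ M : Matrix (Fin dA × Fin dB) (Fin dA × Fin dB) ℂ,
      M.PosSemidef ∧ ((1 : Matrix (Fin dB) (Fin dB) ℂ) - ptrFst M).PosSemidef ∧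
        r = (ρ * M).trace.re} := by
    refine ⟨dB, ?_⟩
    rintro _ ⟨M, hM, hMB, rfl⟩
    exact (re_trace_mul_le_re_trace hρ hρtr hM).trans
      (re_trace_le_card_of_posSemidef_one_sub_ptrFst hMB |>.trans_eq (by rw [Fintype.card_fin]))
  rw [ge_iff_le, neg_mul, neg_le_neg_iff]
  apply two_mul_log_sSup_le_log
  · obtain ⟨V, hV, hVB, hV_pos⟩ := exists_feasible_re_trace_mul_add_conjTranspose_pos hρtr
    exact ⟨_, ⟨V, hV, hVB, rfl⟩, hV_pos⟩
  · rintro _ ⟨V, -, hVB, rfl⟩ t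
    have hmem := le_csSup hbdd ⟨Vᴴ * V, posSemidef_conjTranspose_mul_self V, hVB, rfl⟩
    linarith [mul_re_trace_mul_add_conjTranspose_le hρ hρtr V t]
end
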